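/- arXiv:1512.02423 — 4 statements merged into one kernel-verified Lean document; each statement's English description precedes it below -/
import Mathlib

section
/- (Van der Corput, higher order case) Let k ≥ 2 be an integer. There exists a constant C > 0 depending only on k (in particular independent of a and b) such that for every a < b, every Φ ∈ C^k on [a, b] satisfying |Φ^{(k)}(x)| ≥ 1 for all x ∈ [a, b], and every t > 0, one has |∫_a^b e^{itΦ(ξ)} dξ| ≤ C t^{−1/k}. -/
/-!
First-order estimate: if `|Φ'| ≥ λ` and `Φ'` is monotone, integrating by parts with
`e^{itΦ} = (itΦ')⁻¹ (e^{itΦ})'` bounds the integral by two boundary terms and the total variation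
of `(tΦ')⁻¹`, each at most `1 / (tλ)`.

Induction: if `|Φ^{(k+1)}| ≥ λ`, the mean value theorem makes `g = Φ^{(k)}` grow linearly away
from a point `x₀` where `|g|` is minimal, `|g x| ≥ λ |x - x₀|`. Off the interval of radius `r`
around `x₀` we have `|g| ≥ λ r`, so the order-`k` estimate bounds the two outer pieces by
`C (tλr)^(-1/k)`, while the middle piece contributes at most its length `2r`; the choice
`r = (tλ)^(-1/(k+1))` balances the two. The case `k + 1 = 2` runs the same way, with the
first-order estimate on the outer pieces (`Φ''` has constant sign, so `Φ'` is monotone).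
-/

open MeasureTheory Real Set intervalIntegral
open scoped Topology

theorem IsPreconnected.forall_le_or_forall_le_neg_of_le_abs {X : Type*} [TopologicalSpace X]
    {s : Set X} {f : X → ℝ} {lam : ℝ} (hs : IsPreconnected s) (hf : ContinuousOn f s)
    (hlam : 0 < lam) (hfs : ∀ x ∈ s, lam ≤ |f x|) :
    (∀ x ∈ s, lam ≤ f x) ∨ ∀ x ∈ s, f x ≤ -lam := by
  by_contra! ⟨⟨x, hx, hfx⟩, ⟨y, hy, hfy⟩⟩
  have hfx' : f x ≤ -lam := (le_abs'.1 (hfs x hx)).resolve_right hfx.not_ge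
  have hfy' : lam ≤ f y := (le_abs'.1 (hfs y hy)).resolve_left hfy.not_ge
  obtain ⟨z, hz, hfz⟩ := hs.intermediate_value hx hy hf
    (show (0 : ℝ) ∈ Icc (f x) (f y) from ⟨by linarith, by linarith⟩)
  linarith [hfs z hz, hfz ▸ abs_zero (α := ℝ)]

theorem IsPreconnected.abs_inv_sub_inv_le_of_le_abs {X : Type*} [TopologicalSpace X]
    {s : Set X} {f : X → ℝ} {lam : ℝ} (hs : IsPreconnected s) (hf : ContinuousOn f s)
    (hlam : 0 < lam) (hfs : ∀ x ∈ s, lam ≤ |f x|) {x y : X} (hx : x ∈ s) (hy : y ∈ s) :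
    |(f x)⁻¹ - (f y)⁻¹| ≤ lam⁻¹ := by
  have hinv {p q : ℝ} (hp : lam ≤ p) (hq : lam ≤ q) : |p⁻¹ - q⁻¹| ≤ lam⁻¹ :=
    abs_sub_le_of_nonneg_of_le (inv_nonneg.2 (hlam.le.trans hp)) (inv_anti₀ hlam hp)
      (inv_nonneg.2 (hlam.le.trans hq)) (inv_anti₀ hlam hq)
  rcases hs.forall_le_or_forall_le_neg_of_le_abs hf hlam hfs with hpos | hneg
  · exact hinv (hpos x hx) (hpos y hy)
  · rw [← abs_neg, neg_sub, ← neg_sub_neg, ← inv_neg, ← inv_neg]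
    exact hinv (le_neg.1 (hneg x hx)) (le_neg.1 (hneg y hy))

theorem mul_abs_sub_le_abs_sub_of_le_abs_deriv {g g' : ℝ → ℝ} {a b lam : ℝ}
    (hg : ContinuousOn g (Icc a b)) (hg' : ∀ x ∈ Ioo a b, HasDerivAt g (g' x) x)
    (hlam : ∀ x ∈ Ioo a b, lam ≤ |g' x|) {x y : ℝ} (hx : x ∈ Icc a b) (hy : y ∈ Icc a b) :
    lam * |x - y| ≤ |g x - g y| := by
  wlog hxy : x < y generalizing x y
  · rcases (not_lt.1 hxy).eq_or_lt with rfl | hyx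
    · simp
    · simpa only [abs_sub_comm] using this hy hx hyx
  have hyx : 0 < y - x := sub_pos.2 hxy
  obtain ⟨c, hc, hslope⟩ := exists_hasDerivAt_eq_slope g g' hxy
    (hg.mono (Icc_subset_Icc hx.1 hy.2))
    (fun z hz => hg' z ⟨hx.1.trans_lt hz.1, hz.2.trans_le hy.2⟩)
  have hgc : |g y - g x| = |g' c| * (y - x) := by
    rw [hslope, abs_div, abs_of_pos hyx, div_mul_cancel₀ _ hyx.ne']
  rw [abs_sub_comm x, abs_sub_comm (g x), abs_of_pos hyx, hgc]
  exact mul_le_mul_of_nonneg_right (hlam c ⟨hx.1.trans_lt hc.1, hc.2.trans_le hy.2⟩) hyx.le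

theorem exists_forall_mul_abs_sub_le_abs {g : ℝ → ℝ} {a b lam : ℝ} (hab : a ≤ b)
    (hg : ContinuousOn g (Icc a b))
    (hgrowth : ∀ x ∈ Icc a b, ∀ y ∈ Icc a b, lam * |x - y| ≤ |g x - g y|) :
    ∃ x₀ ∈ Icc a b, ∀ x ∈ Icc a b, lam * |x - x₀| ≤ |g x| := by
  obtain ⟨x₀, hx₀, hmin⟩ := isCompact_Icc.exists_isMinOn (nonempty_Icc.2 hab) hg.abs
  refine ⟨x₀, hx₀, fun x hx => (hgrowth x hx x₀ hx₀).trans ?_⟩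
  rcases eq_or_ne (g x₀) 0 with h0 | h0
  · simp [h0]
  -- `|g|` is minimal at `x₀` and nonzero there, so `g` has the sign of `g x₀` throughout
  rcases isPreconnected_Icc.forall_le_or_forall_le_neg_of_le_abs hg (abs_pos.2 h0)
    (fun y hy => hmin hy) with hpos | hneg
  · have := hpos x hx; have := hpos x₀ hx₀
    rw [abs_sub_le_iff]
    constructor <;> linarith [le_abs_self (g x), le_abs_self (g x₀), abs_nonneg (g x₀),
      abs_nonneg (g x)]
  · have := hneg x hx; have := hneg x₀ hx₀
    rw [abs_sub_le_iff]
    constructor <;> linarith [neg_abs_le (g x₀), neg_le_abs (g x), abs_nonneg (g x₀),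
      abs_nonneg (g x)]

theorem integral_abs_deriv_eq_abs_sub {f f' : ℝ → ℝ} {a b : ℝ} (hab : a ≤ b)
    (hf : ContinuousOn f (Icc a b)) (hf' : ∀ x ∈ Ioo a b, HasDerivAt f (f' x) x)
    (hint : IntervalIntegrable f' volume a b)
    (hsign : (∀ x ∈ Icc a b, 0 ≤ f' x) ∨ ∀ x ∈ Icc a b, f' x ≤ 0) :
    ∫ x in a..b, |f' x| = |f b - f a| := by
  have hftc := integral_eq_sub_of_hasDerivAt_of_le hab hf hf' hint
  rcases hsign with hpos | hneg
  · rw [integral_congr fun x hx => abs_of_nonneg (hpos x (uIcc_of_le hab ▸ hx)), hftc,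
      abs_of_nonneg (hftc ▸ integral_nonneg hab hpos)]
  · have hnonneg := integral_nonneg (μ := volume) hab fun x hx => neg_nonneg.2 (hneg x hx)
    rw [intervalIntegral.integral_neg, hftc] at hnonneg
    rw [integral_congr fun x hx => abs_of_nonpos (hneg x (uIcc_of_le hab ▸ hx)),
      intervalIntegral.integral_neg, hftc, abs_of_nonpos (by linarith)]

theorem norm_integral_cexp_le_of_hasDerivAt_inv {Φ φ ψ' : ℝ → ℝ} {a b t : ℝ} (hab : a ≤ b)
    (ht : 0 < t) (hΦ : ContinuousOn Φ (Icc a b)) (hΦ' : ∀ x ∈ Ioo a b, HasDerivAt Φ (φ x) x)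
    (hφ : ContinuousOn φ (Icc a b)) (hφ0 : ∀ x ∈ Icc a b, φ x ≠ 0)
    (hψ' : ∀ x ∈ Ioo a b, HasDerivAt (fun x => (φ x)⁻¹) (ψ' x) x)
    (hψ'c : ContinuousOn ψ' (Icc a b)) :
    ‖∫ x in a..b, Complex.exp (Complex.I * ((t * Φ x : ℝ) : ℂ))‖ ≤
      (|φ a|⁻¹ + |φ b|⁻¹ + ∫ x in a..b, |ψ' x|) / t := by
  set e : ℝ → ℂ := fun x => Complex.exp (Complex.I * ((t * Φ x : ℝ) : ℂ))
  -- integrate by parts against `e' = i t φ e`, with `u = 1 / (i t φ)`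
  set u : ℝ → ℂ := fun x => -Complex.I * (((φ x)⁻¹ / t : ℝ) : ℂ)
  set u' : ℝ → ℂ := fun x => -Complex.I * ((ψ' x / t : ℝ) : ℂ)
  have he' : ∀ x ∈ Ioo a b, HasDerivAt e (e x * (Complex.I * ((t * φ x : ℝ) : ℂ))) x :=
    fun x hx => (((hΦ' x hx).const_mul t).ofReal_comp.const_mul Complex.I).cexp
  have hu' : ∀ x ∈ Ioo a b, HasDerivAt u (u' x) x :=
    fun x hx => (((hψ' x hx).div_const t).ofReal_comp).const_mul (-Complex.I)
  have hue : ∀ x ∈ Icc a b, u x * (e x * (Complex.I * ((t * φ x : ℝ) : ℂ))) = e x := by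
    intro x hx
    have : (φ x : ℂ) ≠ 0 := Complex.ofReal_ne_zero.2 (hφ0 x hx)
    have : (t : ℂ) ≠ 0 := Complex.ofReal_ne_zero.2 ht.ne'
    simp only [u]
    push_cast
    field_simp
    rw [Complex.I_sq]
    ring
  have hφinv : ContinuousOn (fun x => (φ x)⁻¹) (Icc a b) := hφ.inv₀ hφ0
  have hparts : ∫ x in a..b, e x = u b * e b - u a * e a - ∫ x in a..b, u' x * e x := by
    rw [← integral_mul_deriv_eq_deriv_mul_of_hasDerivAt (uIcc_of_le hab ▸ by fun_prop)
      (uIcc_of_le hab ▸ by fun_prop)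
      (by simpa only [min_eq_left hab, max_eq_right hab] using hu')
      (by simpa only [min_eq_left hab, max_eq_right hab] using he')
      (ContinuousOn.intervalIntegrable_of_Icc hab (by fun_prop))
      (ContinuousOn.intervalIntegrable_of_Icc hab (by fun_prop))]
    exact integral_congr fun x hx => (hue x (uIcc_of_le hab ▸ hx)).symm
  have he1 : ∀ x, ‖e x‖ = 1 := fun x => Complex.norm_exp_I_mul_ofReal _
  have hboundary : ∀ x, ‖u x * e x‖ = |φ x|⁻¹ / t := fun x => by
    simp only [u, norm_mul, he1, norm_neg, Complex.norm_I, Complex.norm_real, norm_eq_abs,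
      abs_div, abs_inv, abs_of_pos ht, one_mul, mul_one]
  have hremainder : ‖∫ x in a..b, u' x * e x‖ ≤ (∫ x in a..b, |ψ' x|) / t := calc
    ‖∫ x in a..b, u' x * e x‖ ≤ ∫ x in a..b, ‖u' x * e x‖ := norm_integral_le_integral_norm hab
    _ = (∫ x in a..b, |ψ' x|) / t := by
      rw [← intervalIntegral.integral_div]
      congr 1 with x
      simp only [u', norm_mul, he1, norm_neg, Complex.norm_I, Complex.norm_real, norm_eq_abs,
        abs_div, abs_of_pos ht, one_mul, mul_one]
  rw [hparts, add_div, add_div, ← hboundary, ← hboundary]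
  calc _ ≤ ‖u b * e b‖ + ‖u a * e a‖ + ‖∫ x in a..b, u' x * e x‖ :=
        (norm_sub_le _ _).trans (by gcongr; exact norm_sub_le _ _)
    _ ≤ _ := by linarith

theorem norm_integral_cexp_le_of_le_abs_deriv {Φ φ φ' : ℝ → ℝ} {a b t lam : ℝ} (hab : a ≤ b)
    (ht : 0 < t) (hlam : 0 < lam) (hΦ : ContinuousOn Φ (Icc a b))
    (hΦ' : ∀ x ∈ Ioo a b, HasDerivAt Φ (φ x) x) (hφ : ContinuousOn φ (Icc a b))
    (hφ' : ∀ x ∈ Ioo a b, HasDerivAt φ (φ' x) x) (hφ'c : ContinuousOn φ' (Icc a b))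
    (hφlam : ∀ x ∈ Icc a b, lam ≤ |φ x|)
    (hsign : (∀ x ∈ Icc a b, 0 ≤ φ' x) ∨ ∀ x ∈ Icc a b, φ' x ≤ 0) :
    ‖∫ x in a..b, Complex.exp (Complex.I * ((t * Φ x : ℝ) : ℂ))‖ ≤ 3 / (t * lam) := by
  have hφ0 : ∀ x ∈ Icc a b, φ x ≠ 0 := fun x hx h0 => by
    have := hφlam x hx
    rw [h0, abs_zero] at this
    linarith
  have ha : a ∈ Icc a b := left_mem_Icc.2 hab
  have hb : b ∈ Icc a b := right_mem_Icc.2 hab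
  have hψ' : ∀ x ∈ Ioo a b, HasDerivAt (fun x => (φ x)⁻¹) (-φ' x / φ x ^ 2) x :=
    fun x hx => (hφ' x hx).inv (hφ0 x (Ioo_subset_Icc_self hx))
  have hψ'c : ContinuousOn (fun x => -φ' x / φ x ^ 2) (Icc a b) :=
    hφ'c.neg.div (hφ.pow 2) fun x hx => pow_ne_zero 2 (hφ0 x hx)
  have hvariation : ∫ x in a..b, |-φ' x / φ x ^ 2| ≤ lam⁻¹ := by
    rw [integral_abs_deriv_eq_abs_sub hab (hφ.inv₀ hφ0) hψ' (hψ'c.intervalIntegrable_of_Icc hab)]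
    · exact isPreconnected_Icc.abs_inv_sub_inv_le_of_le_abs hφ hlam hφlam hb ha
    rcases hsign with hpos | hneg
    · exact Or.inr fun x hx =>
        div_nonpos_of_nonpos_of_nonneg (neg_nonpos.2 (hpos x hx)) (sq_nonneg _)
    · exact Or.inl fun x hx => div_nonneg (neg_nonneg.2 (hneg x hx)) (sq_nonneg _)
  refine (norm_integral_cexp_le_of_hasDerivAt_inv hab ht hΦ hΦ' hφ hφ0 hψ' hψ'c).trans ?_
  rw [mul_comm, ← div_div, div_le_div_iff_of_pos_right ht]
  linarith [inv_anti₀ hlam (hφlam a ha), inv_anti₀ hlam (hφlam b hb), div_eq_mul_inv 3 lam]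

theorem norm_integral_le_of_norm_integral_le_off_ball {E : Type*} [NormedAddCommGroup E]
    [NormedSpace ℝ E] {f : ℝ → E} {a b x₀ r K M : ℝ} (hx₀ : x₀ ∈ Icc a b) (hr : 0 ≤ r)
    (hM : 0 ≤ M) (hf : IntervalIntegrable f volume a b) (hK : ∀ x ∈ Icc a b, ‖f x‖ ≤ K)
    (hpiece : ∀ a' b', a ≤ a' → a' < b' → b' ≤ b → (∀ x ∈ Icc a' b', r ≤ |x - x₀|) →
      ‖∫ x in a'..b', f x‖ ≤ M) :
    ‖∫ x in a..b, f x‖ ≤ 2 * M + 2 * K * r := by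
  set c := max a (x₀ - r)
  set d := min b (x₀ + r)
  have hac : a ≤ c := le_max_left _ _
  have hcd : c ≤ d := (max_le hx₀.1 (by linarith)).trans (le_min hx₀.2 (by linarith))
  have hdb : d ≤ b := min_le_left _ _
  have hint : ∀ {p q}, p ∈ Icc a b → q ∈ Icc a b → IntervalIntegrable f volume p q :=
    fun hp hq => hf.mono_set (uIcc_subset_uIcc (Icc_subset_uIcc hp) (Icc_subset_uIcc hq))
  have hc : c ∈ Icc a b := ⟨hac, hcd.trans hdb⟩
  have hd : d ∈ Icc a b := ⟨hac.trans hcd, hdb⟩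
  have hleft : ‖∫ x in a..c, f x‖ ≤ M := by
    rcases hac.eq_or_lt with h | h
    · rw [← h, integral_same, norm_zero]; exact hM
    have hc' : c = x₀ - r := max_eq_right ((lt_max_iff.1 h).resolve_left (lt_irrefl a)).le
    refine hpiece a c le_rfl h hc.2 fun x hx => ?_
    rw [abs_sub_comm]
    exact le_abs.2 (Or.inl (by linarith [hx.2]))
  have hright : ‖∫ x in d..b, f x‖ ≤ M := by
    rcases hdb.eq_or_lt with h | h
    · rw [h, integral_same, norm_zero]; exact hM
    have hd' : d = x₀ + r := min_eq_right ((min_lt_iff.1 h).resolve_left (lt_irrefl b)).le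
    refine hpiece d b hd.1 h le_rfl fun x hx => ?_
    exact le_abs.2 (Or.inl (by linarith [hx.1]))
  have hmiddle : ‖∫ x in c..d, f x‖ ≤ K * (2 * r) := by
    refine (intervalIntegral.norm_integral_le_of_norm_le_const (C := K) fun x hx => ?_).trans ?_
    · rw [uIoc_of_le hcd] at hx
      exact hK x ⟨hac.trans hx.1.le, hx.2.trans hdb⟩
    · have hK0 : 0 ≤ K := (norm_nonneg _).trans (hK x₀ hx₀)
      rw [abs_of_nonneg (sub_nonneg.2 hcd)]
      exact mul_le_mul_of_nonneg_left (by grind) hK0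
  have ha : a ∈ Icc a b := ⟨le_rfl, hx₀.1.trans hx₀.2⟩
  have hb : b ∈ Icc a b := ⟨hx₀.1.trans hx₀.2, le_rfl⟩
  rw [← integral_add_adjacent_intervals (hint ha hd) (hint hd hb),
    ← integral_add_adjacent_intervals (hint ha hc) (hint hc hd)]
  calc _ ≤ ‖∫ x in a..c, f x‖ + ‖∫ x in c..d, f x‖ + ‖∫ x in d..b, f x‖ := norm_add₃_le
    _ ≤ 2 * M + 2 * K * r := by linarith

theorem self_mul_rpow_neg_one_div_add_one_rpow {x s : ℝ} (hx : 0 < x) (hs : 0 < s) :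
    (x * x ^ (-1 / (s + 1))) ^ (-1 / s) = x ^ (-1 / (s + 1)) := by
  nth_rw 1 [← rpow_one x]
  rw [← rpow_add hx, ← rpow_mul hx.le]
  congr 1
  field_simp
  ring

theorem norm_integral_le_of_le_abs_deriv {E : Type*} [NormedAddCommGroup E] [NormedSpace ℝ E]
    {f : ℝ → E} {g g' : ℝ → ℝ} {a b t lam C s : ℝ} (hab : a ≤ b) (ht : 0 < t)
    (hlam : 0 < lam) (hC : 0 ≤ C) (hs : 0 < s) (hf : IntervalIntegrable f volume a b)
    (hf1 : ∀ x ∈ Icc a b, ‖f x‖ ≤ 1) (hg : ContinuousOn g (Icc a b))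
    (hg' : ∀ x ∈ Ioo a b, HasDerivAt g (g' x) x) (hg'lam : ∀ x ∈ Ioo a b, lam ≤ |g' x|)
    (hpiece : ∀ δ > 0, ∀ a' b', a ≤ a' → a' < b' → b' ≤ b → (∀ x ∈ Icc a' b', δ ≤ |g x|) →
      ‖∫ x in a'..b', f x‖ ≤ C * (t * δ) ^ (-1 / s)) :
    ‖∫ x in a..b, f x‖ ≤ (2 * C + 2) * (t * lam) ^ (-1 / (s + 1)) := by
  set r := (t * lam) ^ (-1 / (s + 1))
  have hr : 0 < r := rpow_pos_of_pos (mul_pos ht hlam) _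
  obtain ⟨x₀, hx₀, hgrowth⟩ := exists_forall_mul_abs_sub_le_abs hab hg
    fun x hx y hy => mul_abs_sub_le_abs_sub_of_le_abs_deriv hg hg' hg'lam hx hy
  have hbound := norm_integral_le_of_norm_integral_le_off_ball (M := C * r) hx₀ hr.le
    (mul_nonneg hC hr.le) hf hf1 fun a' b' ha' hab' hb' hfar => by
      have := hpiece (lam * r) (mul_pos hlam hr) a' b' ha' hab' hb' fun x hx =>
        (mul_le_mul_of_nonneg_left (hfar x hx) hlam.le).trans
          (hgrowth x ⟨ha'.trans hx.1, hx.2.trans hb'⟩)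
      rwa [← mul_assoc, self_mul_rpow_neg_one_div_add_one_rpow (mul_pos ht hlam) hs] at this
  linarith

theorem ContDiffOn.hasDerivAt_iteratedDerivWithin {𝕜 F : Type*} [NontriviallyNormedField 𝕜]
    [NormedAddCommGroup F] [NormedSpace 𝕜 F] {f : 𝕜 → F} {s : Set 𝕜} {x : 𝕜}
    {n : WithTop ℕ∞} {m : ℕ} (hf : ContDiffOn 𝕜 n f s) (hmn : m < n) (hs : UniqueDiffOn 𝕜 s)
    (hx : s ∈ 𝓝 x) :
    HasDerivAt (iteratedDerivWithin m f s) (iteratedDerivWithin (m + 1) f s x) x := by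
  rw [iteratedDerivWithin_succ]
  exact ((hf.differentiableOn_iteratedDerivWithin hmn hs) x
    (mem_of_mem_nhds hx)).hasDerivWithinAt.hasDerivAt hx

theorem iteratedDerivWithin_subset {𝕜 F : Type*} [NontriviallyNormedField 𝕜]
    [NormedAddCommGroup F] [NormedSpace 𝕜 F] {f : 𝕜 → F} {s t : Set 𝕜} {x : 𝕜} {n : ℕ}
    (st : s ⊆ t) (hs : UniqueDiffOn 𝕜 s) (ht : UniqueDiffOn 𝕜 t) (hf : ContDiffOn 𝕜 n f t)
    (hx : x ∈ s) : iteratedDerivWithin n f s x = iteratedDerivWithin n f t x := by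
  simp only [iteratedDerivWithin_eq_iteratedFDerivWithin,
    iteratedFDerivWithin_subset st hs ht hf hx]

theorem norm_integral_cexp_le_of_le_abs_iteratedDerivWithin_succ {Φ : ℝ → ℝ}
    {a b t lam C s : ℝ} {m : ℕ} (hab : a < b) (ht : 0 < t) (hlam : 0 < lam) (hC : 0 ≤ C)
    (hs : 0 < s) (hΦ : ContDiffOn ℝ (m + 1) Φ (Icc a b))
    (hΦlam : ∀ x ∈ Icc a b, lam ≤ |iteratedDerivWithin (m + 1) Φ (Icc a b) x|)
    (hpiece : ∀ δ > 0, ∀ a' b', a ≤ a' → a' < b' → b' ≤ b →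
      (∀ x ∈ Icc a' b', δ ≤ |iteratedDerivWithin m Φ (Icc a b) x|) →
      ‖∫ ξ in a'..b', Complex.exp (Complex.I * ((t * Φ ξ : ℝ) : ℂ))‖ ≤ C * (t * δ) ^ (-1 / s)) :
    ‖∫ ξ in a..b, Complex.exp (Complex.I * ((t * Φ ξ : ℝ) : ℂ))‖ ≤
      (2 * C + 2) * (t * lam) ^ (-1 / (s + 1)) := by
  have hI := uniqueDiffOn_Icc hab
  have hΦc := hΦ.continuousOn
  refine norm_integral_le_of_le_abs_deriv hab.le ht hlam hC hs
    (ContinuousOn.intervalIntegrable_of_Icc hab.le (by fun_prop))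
    (fun x _ => (Complex.norm_exp_I_mul_ofReal _).le)
    (hΦ.continuousOn_iteratedDerivWithin (by norm_cast; omega) hI)
    (fun x hx => hΦ.hasDerivAt_iteratedDerivWithin (by norm_cast; omega) hI
      (Icc_mem_nhds hx.1 hx.2))
    (fun x hx => hΦlam x (Ioo_subset_Icc_self hx)) hpiece

theorem exists_norm_integral_cexp_le_of_le_abs_iteratedDerivWithin (k : ℕ) (hk : 2 ≤ k) :
    ∃ C > 0, ∀ lam > 0, ∀ a b : ℝ, a < b → ∀ Φ : ℝ → ℝ, ContDiffOn ℝ k Φ (Icc a b) →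
      (∀ x ∈ Icc a b, lam ≤ |iteratedDerivWithin k Φ (Icc a b) x|) → ∀ t > 0,
        ‖∫ ξ in a..b, Complex.exp (Complex.I * ((t * Φ ξ : ℝ) : ℂ))‖ ≤
          C * (t * lam) ^ (-1 / (k : ℝ)) := by
  induction k, hk using Nat.le_induction with
  | base =>
    refine ⟨2 * 3 + 2, by norm_num, fun lam hlam a b hab Φ hΦ hΦlam t ht => ?_⟩
    have hI := uniqueDiffOn_Icc hab
    have hderiv (m : ℕ) (hm : m < 2) (x : ℝ) (hx : x ∈ Ioo a b) :=
      hΦ.hasDerivAt_iteratedDerivWithin (by exact_mod_cast hm) hI (Icc_mem_nhds hx.1 hx.2)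
    have hcont (m : ℕ) (hm : m ≤ 2) :=
      hΦ.continuousOn_iteratedDerivWithin (by exact_mod_cast hm) hI
    have hsign := isPreconnected_Icc.forall_le_or_forall_le_neg_of_le_abs (hcont 2 le_rfl) hlam
      hΦlam
    have := norm_integral_cexp_le_of_le_abs_iteratedDerivWithin_succ (m := 1) (C := 3) (s := 1)
      hab ht hlam (by norm_num) one_pos hΦ hΦlam fun δ hδ a' b' ha' hab' hb' hδΦ => by
        have hsub : Icc a' b' ⊆ Icc a b := Icc_subset_Icc ha' hb'
        have hsub' : Ioo a' b' ⊆ Ioo a b := Ioo_subset_Ioo ha' hb'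
        rw [div_one, rpow_neg_one, ← div_eq_mul_inv]
        refine norm_integral_cexp_le_of_le_abs_deriv hab'.le ht hδ
          ((hcont 0 (by norm_num)).mono hsub) ?_ ((hcont 1 one_le_two).mono hsub)
          (fun x hx => hderiv 1 one_lt_two x (hsub' hx))
          ((hcont 2 le_rfl).mono hsub) hδΦ ?_
        · simpa only [iteratedDerivWithin_zero] using fun x hx => hderiv 0 two_pos x (hsub' hx)
        · rcases hsign with hpos | hneg
          · exact Or.inl fun x hx => hlam.le.trans (hpos x (hsub hx))
          · exact Or.inr fun x hx => (hneg x (hsub hx)).trans (neg_nonpos.2 hlam.le)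
    rwa [show ((2 : ℕ) : ℝ) = 1 + 1 by norm_num]
  | succ m hm IH =>
    obtain ⟨C, hC, IH⟩ := IH
    refine ⟨2 * C + 2, by positivity, fun lam hlam a b hab Φ hΦ hΦlam t ht => ?_⟩
    have hΦm : ContDiffOn ℝ m Φ (Icc a b) := hΦ.of_le (by norm_cast; omega)
    have := norm_integral_cexp_le_of_le_abs_iteratedDerivWithin_succ (s := m) hab ht hlam hC.le
      (by positivity) (by exact_mod_cast hΦ) hΦlam fun δ hδ a' b' ha' hab' hb' hδΦ => by
        have hsub : Icc a' b' ⊆ Icc a b := Icc_subset_Icc ha' hb'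
        refine IH δ hδ a' b' hab' Φ (hΦm.mono hsub) (fun x hx => ?_) t ht
        rw [iteratedDerivWithin_subset hsub (uniqueDiffOn_Icc hab') (uniqueDiffOn_Icc hab) hΦm hx]
        exact hδΦ x hx
    rwa [Nat.cast_succ]

/-- Van der Corput's lemma, higher order case: if `|Φ^{(k)}| ≥ 1` on `[a,b]` with `k ≥ 2`,
then `|∫_a^b e^{itΦ}| ≤ C t^{-1/k}` with `C` depending only on `k`. -/
theorem van_der_corput_higher_order (k : ℕ) (hk : 2 ≤ k) :
    ∃ C > 0, ∀ a b : ℝ, a < b → ∀ Φ : ℝ → ℝ,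
      ContDiffOn ℝ k Φ (Set.Icc a b) →
      (∀ x ∈ Set.Icc a b, 1 ≤ |iteratedDerivWithin k Φ (Set.Icc a b) x|) →
      ∀ t > 0,
        ‖∫ ξ in a..b, Complex.exp (Complex.I * ((t * Φ ξ : ℝ) : ℂ))‖ ≤
          C * t ^ (-(1:ℝ) / k) := by
  obtain ⟨C, hC, hbound⟩ := exists_norm_integral_cexp_le_of_le_abs_iteratedDerivWithin k hk
  refine ⟨C, hC, fun a b hab Φ hΦ hΦ1 t ht => ?_⟩
  simpa only [mul_one] using hbound 1 one_pos a b hab Φ hΦ hΦ1 t ht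
end

section
/- (Van der Corput, first order case) There exists a universal constant C > 0 (independent of a and b) such that for every a < b, every Φ ∈ C¹ on [a, b] such that Φ' is monotone on [a, b] and |Φ'(x)| ≥ 1 for all x ∈ [a, b], and every t > 0, one has |∫_a^b e^{itΦ(ξ)} dξ| ≤ C / t. -/
open MeasureTheory Real Set intervalIntegral

/-!
Write `e^{itΦ} = (Φ')⁻¹ • (Φ' • e^{itΦ})`. The second factor is the derivative of
`e^{itΦ} / (it)`, so all its partial integrals `∫_y^b` have size at most `2 / t`. The weight
`(Φ')⁻¹` is bounded by `1` and antitone (resp. monotone) when `Φ'` is monotone (resp. antitone),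
because `Φ'`, being continuous with `|Φ'| ≥ 1`, has constant sign. An integral form of Abel summation — Fubini against the
Stieltjes measure of the weight — bounds `∫_a^b g • f` by `3 · sup |g| · sup_y ‖∫_y^b f‖` for
monotone `g`, which gives the constant `6`.
-/

variable {E : Type*} [NormedAddCommGroup E] [NormedSpace ℝ E] [CompleteSpace E]

theorem StieltjesFunction.intervalIntegral_sub_smul_eq (G : StieltjesFunction ℝ) {f : ℝ → E}
    {a b : ℝ} (hab : a ≤ b) (hf : IntervalIntegrable f volume a b) :
    ∫ x in a..b, (G x - G a) • f x = ∫ y in Ioc a b, (∫ x in y..b, f x) ∂G.measure := by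
  have : IsFiniteMeasure (G.measure.restrict (Ioc a b)) :=
    ⟨by rw [Measure.restrict_apply_univ, G.measure_Ioc]; exact ENNReal.ofReal_lt_top⟩
  set S : Set (ℝ × ℝ) := {p | a < p.2 ∧ p.2 ≤ p.1}
  have hS : MeasurableSet S :=
    (measurableSet_lt measurable_const measurable_snd).inter
      (measurableSet_le measurable_snd measurable_fst)
  have hint : Integrable (Function.uncurry fun x y => S.indicator (fun p => f p.1) (x, y))
      ((volume.restrict (Ioc a b)).prod (G.measure.restrict (Ioc a b))) :=
    (hf.1.comp_fst _).indicator hS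
  have hx : ∀ x ∈ Ioc a b, ∫ y in Ioc a b, S.indicator (fun p => f p.1) (x, y) ∂G.measure
      = (G x - G a) • f x := by
    intro x hx
    have hslice : (fun y => S.indicator (fun p => f p.1) (x, y)) = (Ioc a x).indicator fun _ => f x := by
      ext y; simp [S, Set.indicator_apply]
    rw [hslice, integral_indicator_const _ measurableSet_Ioc, measureReal_def,
      Measure.restrict_apply measurableSet_Ioc,
      inter_eq_left.mpr (Ioc_subset_Ioc_right hx.2), G.measure_Ioc,
      ENNReal.toReal_ofReal (sub_nonneg.mpr (G.mono hx.1.le))]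
  have hy : ∀ y ∈ Ioc a b, ∫ x in Ioc a b, S.indicator (fun p => f p.1) (x, y)
      = ∫ x in y..b, f x := by
    intro y hy
    have hslice : (fun x => S.indicator (fun p => f p.1) (x, y)) = (Ici y).indicator f := by
      ext x; by_cases h : y ≤ x <;> simp [S, h, hy.1]
    have hIcc : Ici y ∩ Ioc a b = Icc y b := by
      ext x; simp only [mem_inter_iff, mem_Ici, mem_Ioc, mem_Icc]
      exact ⟨fun h => ⟨h.1, h.2.2⟩, fun h => ⟨h.1, hy.1.trans_le h.1, h.2⟩⟩
    rw [hslice, MeasureTheory.integral_indicator measurableSet_Ici,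
      Measure.restrict_restrict measurableSet_Ici, hIcc, integral_Icc_eq_integral_Ioc,
      ← integral_of_le hy.2]
  rw [integral_of_le hab, ← setIntegral_congr_fun measurableSet_Ioc hx,
    integral_integral_swap hint]
  exact setIntegral_congr_fun measurableSet_Ioc hy

theorem norm_intervalIntegral_smul_le_of_monotoneOn {g : ℝ → ℝ} {f : ℝ → E} {a b B M : ℝ}
    (hab : a ≤ b) (hg : MonotoneOn g (Icc a b)) (hgc : ContinuousOn g (Icc a b))
    (hgB : ∀ x ∈ Icc a b, |g x| ≤ B) (hf : IntervalIntegrable f volume a b)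
    (hM : ∀ y ∈ Icc a b, ‖∫ x in y..b, f x‖ ≤ M) :
    ‖∫ x in a..b, g x • f x‖ ≤ 3 * B * M := by
  have hproj : ∀ x, (projIcc a b hab x : ℝ) ∈ Icc a b := fun x => (projIcc a b hab x).2
  have hcont : Continuous fun x => g (projIcc a b hab x) :=
    hgc.comp_continuous (continuous_subtype_val.comp continuous_projIcc) hproj
  let G : StieltjesFunction ℝ :=
    { toFun := fun x => g (projIcc a b hab x)
      mono' := fun x y hxy => hg (hproj x) (hproj y) (monotone_projIcc hab hxy)
      right_continuous' := fun x => hcont.continuousWithinAt }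
  have hG : ∀ x ∈ Icc a b, G x = g x := fun x hx => by
    simp [G, projIcc_of_mem hab hx]
  have ha : a ∈ Icc a b := left_mem_Icc.mpr hab
  have hM0 : 0 ≤ M := by simpa using hM b (right_mem_Icc.mpr hab)
  have hsplit : ∫ x in a..b, g x • f x
      = (∫ x in a..b, (G x - G a) • f x) + g a • ∫ x in a..b, f x := by
    have hGc : ContinuousOn (fun x => G x - G a) (uIcc a b) :=
      (hcont.sub continuous_const).continuousOn
    rw [← intervalIntegral.integral_smul, ← intervalIntegral.integral_add
      (hf.continuousOn_smul hGc) (hf.continuousOn_smul continuousOn_const)]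
    refine integral_congr fun x hx => ?_
    rw [uIcc_of_le hab] at hx
    simp only [hG x hx, hG a ha, ← add_smul, sub_add_cancel]
  have hvar : ‖∫ x in a..b, (G x - G a) • f x‖ ≤ 2 * B * M := by
    have hμ : G.measure (Ioc a b) = ENNReal.ofReal (g b - g a) := by
      rw [G.measure_Ioc, hG a ha, hG b (right_mem_Icc.mpr hab)]
    rw [G.intervalIntegral_sub_smul_eq hab hf]
    calc ‖∫ y in Ioc a b, (∫ x in y..b, f x) ∂G.measure‖
        ≤ M * (G.measure (Ioc a b)).toReal :=
          norm_setIntegral_le_of_norm_le_const (hμ ▸ ENNReal.ofReal_lt_top)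
            fun y hy => hM y (Ioc_subset_Icc_self hy)
      _ ≤ M * (2 * B) := by
          rw [hμ, ENNReal.toReal_ofReal (sub_nonneg.mpr (hg ha (right_mem_Icc.mpr hab) hab))]
          have := abs_le.mp (hgB a ha)
          have := abs_le.mp (hgB b (right_mem_Icc.mpr hab))
          gcongr
          linarith
      _ = 2 * B * M := by ring
  have hfirst : ‖g a • ∫ x in a..b, f x‖ ≤ B * M := by
    rw [norm_smul]
    exact mul_le_mul (hgB a ha) (hM a ha) (norm_nonneg _) ((abs_nonneg _).trans (hgB a ha))
  calc ‖∫ x in a..b, g x • f x‖ ≤ 2 * B * M + B * M :=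
        hsplit ▸ (norm_add_le _ _).trans (add_le_add hvar hfirst)
    _ = 3 * B * M := by ring

theorem norm_intervalIntegral_smul_le_of_antitoneOn {g : ℝ → ℝ} {f : ℝ → E} {a b B M : ℝ}
    (hab : a ≤ b) (hg : AntitoneOn g (Icc a b)) (hgc : ContinuousOn g (Icc a b))
    (hgB : ∀ x ∈ Icc a b, |g x| ≤ B) (hf : IntervalIntegrable f volume a b)
    (hM : ∀ y ∈ Icc a b, ‖∫ x in y..b, f x‖ ≤ M) :
    ‖∫ x in a..b, g x • f x‖ ≤ 3 * B * M := by
  have h := norm_intervalIntegral_smul_le_of_monotoneOn hab hg.neg hgc.neg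
    (fun x hx => (abs_neg (g x)).trans_le (hgB x hx)) hf hM
  simpa only [Pi.neg_apply, neg_smul, intervalIntegral.integral_neg, norm_neg] using h

theorem MonotoneOn.antitoneOn_inv {φ : ℝ → ℝ} {s : Set ℝ} [s.OrdConnected]
    (hφ : MonotoneOn φ s) (hc : ContinuousOn φ s) (h0 : ∀ x ∈ s, φ x ≠ 0) :
    AntitoneOn (fun x => (φ x)⁻¹) s := by
  intro x hx y hy hxy
  have hsign : 0 < φ x * φ y := by
    by_contra! h
    have hle : φ x ≤ 0 ∧ 0 ≤ φ y := by
      have := hφ hx hy hxy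
      constructor <;> nlinarith [mul_self_nonneg (φ x), mul_self_nonneg (φ y)]
    have hxy_sub : Icc x y ⊆ s := Set.OrdConnected.out ‹_› hx hy
    obtain ⟨z, hz, hz0⟩ := intermediate_value_Icc hxy (hc.mono hxy_sub) hle
    exact h0 z (hxy_sub hz) hz0
  rcases (h0 x hx).lt_or_gt with hneg | hpos
  · exact (inv_le_inv_of_neg (by nlinarith) hneg).2 (hφ hx hy hxy)
  · exact inv_anti₀ hpos (hφ hx hy hxy)

theorem AntitoneOn.monotoneOn_inv {φ : ℝ → ℝ} {s : Set ℝ} [s.OrdConnected]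
    (hφ : AntitoneOn φ s) (hc : ContinuousOn φ s) (h0 : ∀ x ∈ s, φ x ≠ 0) :
    MonotoneOn (fun x => (φ x)⁻¹) s := by
  have h := hφ.neg.antitoneOn_inv hc.neg fun x hx => neg_ne_zero.mpr (h0 x hx)
  simpa only [Pi.neg_apply, inv_neg, neg_neg] using h.neg

theorem norm_intervalIntegral_deriv_smul_cexp_le {Φ φ : ℝ → ℝ} {a b t y : ℝ}
    (hΦ : ∀ x ∈ Icc a b, HasDerivWithinAt Φ (φ x) (Icc a b) x) (hφ : ContinuousOn φ (Icc a b))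
    (ht : t ≠ 0) (hy : y ∈ Icc a b) :
    ‖∫ x in y..b, φ x • Complex.exp (Complex.I * ((t * Φ x : ℝ) : ℂ))‖ ≤ 2 / |t| := by
  set H : ℝ → ℂ := fun x => (Complex.I * t)⁻¹ * Complex.exp (Complex.I * ((t * Φ x : ℝ) : ℂ))
  have hH : ∀ x ∈ Icc a b,
      HasDerivWithinAt H (φ x • Complex.exp (Complex.I * ((t * Φ x : ℝ) : ℂ))) (Icc a b) x := by
    intro x hx
    refine ((((hΦ x hx).const_mul t).ofReal_comp.const_mul Complex.I).cexp.const_mul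
      (Complex.I * t)⁻¹).congr_deriv ?_
    rw [Complex.real_smul]
    have htC : (t : ℂ) ≠ 0 := Complex.ofReal_ne_zero.mpr ht
    push_cast
    field_simp
  have hΦc : ContinuousOn Φ (Icc a b) := fun x hx => (hΦ x hx).continuousWithinAt
  have hsub : uIcc y b ⊆ Icc a b := by
    rw [uIcc_of_le hy.2]; exact Icc_subset_Icc_left hy.1
  have hnorm : ∀ x, ‖H x‖ = 1 / |t| := by
    intro x
    simp [H, Complex.norm_exp]
  rw [integral_eq_sub_of_hasDerivAt_of_le hy.2
    (fun x hx => (hH x (hsub (Icc_subset_uIcc hx))).continuousWithinAt.mono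
      (Icc_subset_uIcc.trans hsub))
    (fun x hx => (hH x (hsub (Icc_subset_uIcc (Ioo_subset_Icc_self hx)))).hasDerivAt
      (Icc_mem_nhds (hy.1.trans_lt hx.1) hx.2))
    ((hφ.smul (by fun_prop)).mono hsub).intervalIntegrable]
  calc ‖H b - H y‖ ≤ ‖H b‖ + ‖H y‖ := norm_sub_le _ _
    _ = 2 / |t| := by rw [hnorm, hnorm]; ring

/-- Van der Corput's lemma, first order case: if `Φ'` is monotone with `|Φ'| ≥ 1` on `[a,b]`,
then `|∫_a^b e^{itΦ}| ≤ C / t` with a universal constant `C`. -/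
theorem van_der_corput_first_order :
    ∃ C > 0, ∀ a b : ℝ, a < b → ∀ Φ : ℝ → ℝ,
      ContDiffOn ℝ 1 Φ (Set.Icc a b) →
      (MonotoneOn (derivWithin Φ (Set.Icc a b)) (Set.Icc a b) ∨
        AntitoneOn (derivWithin Φ (Set.Icc a b)) (Set.Icc a b)) →
      (∀ x ∈ Set.Icc a b, 1 ≤ |derivWithin Φ (Set.Icc a b) x|) →
      ∀ t > 0,
        ‖∫ ξ in a..b, Complex.exp (Complex.I * ((t * Φ ξ : ℝ) : ℂ))‖ ≤ C / t := by
  refine ⟨6, by norm_num, fun a b hab Φ hΦ hmono hge t ht => ?_⟩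
  set φ := derivWithin Φ (Icc a b)
  have hderiv : ∀ x ∈ Icc a b, HasDerivWithinAt Φ (φ x) (Icc a b) x := fun x hx =>
    ((hΦ.differentiableOn one_ne_zero) x hx).hasDerivWithinAt
  have hφc : ContinuousOn φ (Icc a b) := hΦ.continuousOn_derivWithin (uniqueDiffOn_Icc hab) le_rfl
  have hφ0 : ∀ x ∈ Icc a b, φ x ≠ 0 := fun x hx =>
    abs_pos.mp (one_pos.trans_le (hge x hx))
  have hinv : ∀ x ∈ Icc a b, |(φ x)⁻¹| ≤ 1 := fun x hx => by
    rw [abs_inv]; exact inv_le_one_of_one_le₀ (hge x hx)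
  have hΦc : ContinuousOn Φ (Icc a b) := hΦ.continuousOn
  have hf : IntervalIntegrable (fun x => φ x • Complex.exp (Complex.I * ((t * Φ x : ℝ) : ℂ)))
      volume a b :=
    ((hφc.smul (by fun_prop)).mono (uIcc_of_le hab.le).subset).intervalIntegrable
  have hM y (hy : y ∈ Icc a b) := norm_intervalIntegral_deriv_smul_cexp_le hderiv hφc ht.ne' hy
  rw [abs_of_pos ht] at hM
  have hfactor : ∫ ξ in a..b, Complex.exp (Complex.I * ((t * Φ ξ : ℝ) : ℂ))
      = ∫ ξ in a..b, (φ ξ)⁻¹ • φ ξ • Complex.exp (Complex.I * ((t * Φ ξ : ℝ) : ℂ)) := by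
    refine integral_congr fun x hx => ?_
    rw [uIcc_of_le hab.le] at hx
    simp only [smul_smul, inv_mul_cancel₀ (hφ0 x hx), one_smul]
  calc _ ≤ 3 * 1 * (2 / t) := by
        rw [hfactor]
        rcases hmono with h | h
        · exact norm_intervalIntegral_smul_le_of_antitoneOn hab.le (h.antitoneOn_inv hφc hφ0)
            (hφc.inv₀ hφ0) hinv hf hM
        · exact norm_intervalIntegral_smul_le_of_monotoneOn hab.le (h.monotoneOn_inv hφc hφ0)
            (hφc.inv₀ hφ0) hinv hf hM
    _ = 6 / t := by ring
end

section
/- (Lower bound for the second derivative of the phase at low frequencies) There exist constants y₀ > 0 and C > 0, independent of μ, such that for all μ > 0 and all ξ with 0 < ξ ≤ y₀/√μ, one has |ω_μ''(ξ)| ≥ C μ ξ, where ω_μ'' is the second derivative of ω_μ. -/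
open MeasureTheory Real

/-- The dispersion relation `ω_μ(ξ) = √(|ξ| tanh(√μ |ξ|) / √μ)`. -/
noncomputable def omegaWW (μ ξ : ℝ) : ℝ :=
  Real.sqrt (|ξ| * Real.tanh (Real.sqrt μ * |ξ|) / Real.sqrt μ)

/-!
Write `ω_μ(ξ) = μ^{-1/2} g(√μ ξ)` with `g = √f` and `f x = x tanh x`, so that
`ω_μ''(ξ) = √μ g''(√μ ξ)` and it suffices to show `|g''(x)| ≥ x / 16` for `0 < x ≤ 1`.
Since `g'' = (2 f f'' - f'²) / (4 f √f)` and, with `s = sinh x`, `c = cosh x`,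
`f'² - 2 f f'' = ((s c - x)² + 4 x² s²) / c⁴ ≥ x⁴ / 4` (because `s ≥ x` and `c ≤ 2`),
while `f ≤ x²` (because `tanh x ≤ x`), we get `|g''(x)| ≥ (x⁴ / 4) / (4 x³)`.
-/

theorem iteratedDeriv_comp_mul_left {𝕜 : Type*} [NontriviallyNormedField 𝕜] (f : 𝕜 → 𝕜)
    (c : 𝕜) (n : ℕ) :
    iteratedDeriv n (fun x => f (c * x)) = fun x => c ^ n * iteratedDeriv n f (c * x) := by
  induction n with
  | zero => simp
  | succ n ih =>
    ext x
    rw [iteratedDeriv_succ, ih, deriv_const_mul_field (c ^ n), iteratedDeriv_succ,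
      deriv_comp_mul_left c (iteratedDeriv n f), smul_eq_mul, pow_succ, mul_assoc]

theorem iteratedDeriv_two_sqrt {f f' : ℝ → ℝ} {f'' x : ℝ} (hf : ∀ y, HasDerivAt f (f' y) y)
    (hf' : HasDerivAt f' f'' x) (hx : 0 < f x) :
    iteratedDeriv 2 (fun y => √(f y)) x = (2 * f x * f'' - f' x ^ 2) / (4 * f x * √(f x)) := by
  have hpos : ∀ᶠ y in nhds x, 0 < f y := (hf x).continuousAt.eventually (lt_mem_nhds hx)
  have hderiv : deriv (fun y => √(f y)) =ᶠ[nhds x] fun y => f' y / (2 * √(f y)) :=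
    hpos.mono fun y hy => ((hf y).sqrt hy.ne').deriv
  have hsqrt : 0 < √(f x) := Real.sqrt_pos.mpr hx
  have h2 := hf'.div (((hf x).sqrt hx.ne').const_mul 2) (by positivity)
  rw [iteratedDeriv_succ, iteratedDeriv_one, hderiv.deriv_eq]
  refine h2.deriv.trans ?_
  field_simp
  rw [Real.sq_sqrt hx.le]
  ring

theorem Real.hasDerivAt_tanh (x : ℝ) : HasDerivAt tanh (1 / cosh x ^ 2) x := by
  have h := (hasDerivAt_sinh x).div (hasDerivAt_cosh x) (cosh_pos x).ne'
  rw [show tanh = fun y => sinh y / cosh y from funext tanh_eq_sinh_div_cosh]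
  refine h.congr_deriv ?_
  rw [← cosh_sq_sub_sinh_sq x]
  ring

theorem hasDerivAt_mul_tanh (x : ℝ) :
    HasDerivAt (fun y => y * tanh y) (tanh x + x / cosh x ^ 2) x := by
  refine ((hasDerivAt_id' x).mul (hasDerivAt_tanh x)).congr_deriv ?_
  ring

theorem hasDerivAt_tanh_add_div_cosh_sq (x : ℝ) :
    HasDerivAt (fun y => tanh y + y / cosh y ^ 2)
      (2 * (cosh x - x * sinh x) / cosh x ^ 3) x := by
  have hc := cosh_pos x
  refine ((hasDerivAt_tanh x).add ((hasDerivAt_id' x).div ((hasDerivAt_cosh x).pow 2)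
    (pow_pos hc 2).ne')).congr_deriv ?_
  simp only [Pi.pow_apply]
  field_simp
  ring

theorem abs_mul_tanh_mul_abs (a x : ℝ) : |x| * tanh (a * |x|) = x * tanh (a * x) := by
  rcases abs_choice x with h | h <;> rw [h]
  rw [mul_neg, tanh_neg, neg_mul_neg]

theorem omegaWW_eq {μ : ℝ} (hμ : 0 < μ) :
    omegaWW μ = fun ξ => (√μ)⁻¹ * √(√μ * ξ * tanh (√μ * ξ)) := by
  have ha : 0 < √μ := Real.sqrt_pos.mpr hμ
  ext ξ
  rw [omegaWW, abs_mul_tanh_mul_abs,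
    show ξ * tanh (√μ * ξ) / √μ = √μ * ξ * tanh (√μ * ξ) / √μ ^ 2 by field_simp,
    Real.sqrt_div' _ (sq_nonneg _), Real.sqrt_sq ha.le, div_eq_inv_mul]

theorem Real.sinh_le_mul_cosh {x : ℝ} (hx : 0 ≤ x) : sinh x ≤ x * cosh x := by
  rcases hx.eq_or_lt with rfl | hx
  · simp
  obtain ⟨c, hc, hslope⟩ := exists_deriv_eq_slope sinh hx continuous_sinh.continuousOn
    differentiable_sinh.differentiableOn
  rw [deriv_sinh, sinh_zero, sub_zero, sub_zero, eq_div_iff hx.ne'] at hslope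
  have hcx : cosh c ≤ cosh x := cosh_le_cosh.mpr (abs_le_abs_of_nonneg hc.1.le hc.2.le)
  nlinarith

theorem Real.cosh_le_two {x : ℝ} (hx : |x| ≤ 1) : cosh x ≤ 2 := by
  have h1 : cosh x ≤ cosh 1 := cosh_le_cosh.mpr (by simpa using hx)
  have he := exp_one_lt_d9
  have he' : exp (-1) ≤ 1 := exp_le_one_iff.mpr (by norm_num)
  rw [cosh_eq 1] at h1
  linarith

/-- `S` and `C` stand for `sinh x` and `cosh x`; the right-hand side is `-g''(x)`. -/
theorem div_sixteen_le_of_sinh_cosh_bounds {x S C : ℝ} (hx : 0 < x) (hxS : x ≤ S)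
    (hSC : S ≤ x * C) (hC : C ≤ 2) :
    x / 16 ≤ -((2 * (x * (S / C)) * (2 * (C - x * S) / C ^ 3) - (S / C + x / C ^ 2) ^ 2)
      / (4 * (x * (S / C)) * √(x * (S / C)))) := by
  have hS : 0 < S := hx.trans_le hxS
  have hC0 : 0 < C := pos_of_mul_pos_right (hS.trans_le hSC) hx.le
  set f := x * (S / C) with hf_def
  have hf : 0 < f := by positivity
  have hfx : f ≤ x ^ 2 := by
    rw [hf_def, sq]
    gcongr
    rw [div_le_iff₀ hC0]
    linarith
  have hsqrt : √f ≤ x := (Real.sqrt_le_left hx.le).mpr hfx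
  have hnum : x ^ 4 / 4 ≤ (S / C + x / C ^ 2) ^ 2 - 2 * f * (2 * (C - x * S) / C ^ 3) := by
    have hform : (S / C + x / C ^ 2) ^ 2 - 2 * f * (2 * (C - x * S) / C ^ 3)
        = ((S * C - x) ^ 2 + 4 * x ^ 2 * S ^ 2) / C ^ 4 := by
      rw [hf_def]; field_simp; ring
    have hC4 : C ^ 4 ≤ 16 := by
      calc C ^ 4 ≤ 2 ^ 4 := pow_le_pow_left₀ hC0.le hC 4
        _ = 16 := by norm_num
    rw [hform, le_div_iff₀ (by positivity)]
    have hxS2 : x ^ 2 ≤ S ^ 2 := pow_le_pow_left₀ hx.le hxS 2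
    nlinarith [sq_nonneg (S * C - x), pow_pos hx 2, pow_pos hx 4]
  calc x / 16 = (x ^ 4 / 4) / (4 * x ^ 2 * x) := by field_simp; ring
    _ ≤ ((S / C + x / C ^ 2) ^ 2 - 2 * f * (2 * (C - x * S) / C ^ 3)) / (4 * f * √f) :=
      div_le_div₀ ((by positivity : (0 : ℝ) ≤ x ^ 4 / 4).trans hnum) hnum (by positivity)
        (by gcongr)
    _ = _ := by ring

theorem le_abs_iteratedDeriv_two_sqrt_mul_tanh {x : ℝ} (hx : 0 < x) (hx1 : x ≤ 1) :
    x / 16 ≤ |iteratedDeriv 2 (fun y => √(y * tanh y)) x| := by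
  have htanh : 0 < x * tanh x := by
    rw [tanh_eq_sinh_div_cosh]
    exact mul_pos hx (div_pos (sinh_pos_iff.mpr hx) (cosh_pos x))
  rw [iteratedDeriv_two_sqrt hasDerivAt_mul_tanh (hasDerivAt_tanh_add_div_cosh_sq x) htanh,
    tanh_eq_sinh_div_cosh]
  exact le_abs.mpr <| .inr <| div_sixteen_le_of_sinh_cosh_bounds hx (self_le_sinh_iff.mpr hx.le)
    (sinh_le_mul_cosh hx.le) (cosh_le_two (by rwa [abs_of_pos hx]))

/-- Lower bound for the second derivative of the phase at low frequencies. -/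
theorem second_deriv_phase_lower_bound_low_freq :
    ∃ y₀ > 0, ∃ C > 0, ∀ μ > 0, ∀ ξ : ℝ, 0 < ξ → ξ ≤ y₀ / Real.sqrt μ →
      C * μ * ξ ≤ |iteratedDeriv 2 (omegaWW μ) ξ| := by
  refine ⟨1, one_pos, 1 / 16, by norm_num, fun μ hμ ξ hξ hle => ?_⟩
  have ha : 0 < √μ := Real.sqrt_pos.mpr hμ
  have hx1 : √μ * ξ ≤ 1 := by rwa [le_div_iff₀ ha, mul_comm] at hle
  have hbound := le_abs_iteratedDeriv_two_sqrt_mul_tanh (mul_pos ha hξ) hx1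
  rw [omegaWW_eq hμ, iteratedDeriv_const_mul_field,
    iteratedDeriv_comp_mul_left (fun x => √(x * tanh x)), abs_mul, abs_mul, abs_inv,
    abs_pow, abs_of_pos ha]
  calc 1 / 16 * μ * ξ = √μ * ((√μ * ξ) / 16) := by
        rw [show √μ * (√μ * ξ / 16) = √μ ^ 2 * ξ / 16 by ring, Real.sq_sqrt hμ.le]; ring
    _ ≤ √μ * |iteratedDeriv 2 (fun x => √(x * tanh x)) (√μ * ξ)| := by gcongr
    _ = (√μ)⁻¹ * (√μ ^ 2 * |iteratedDeriv 2 (fun x => √(x * tanh x)) (√μ * ξ)|) := by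
        field_simp
end

section
/- (Lower bound for the first derivative of the phase at high frequencies) There exist constants y₀ > 0 and C > 0, independent of μ, such that for all μ > 0 and all ξ ≥ y₀/√μ, one has |ω_μ'(ξ)| ≥ C μ^{−1/4} ξ^{−1/2}, where ω_μ' is the derivative of ω_μ. -/
open MeasureTheory Real

/-!
Writing `g(x) = √(x tanh x) = ω_1(x)`, the scaling `ω_μ(ξ) = g(√μ ξ) / √μ` gives
`ω_μ'(ξ) = g'(√μ ξ)`. Dropping the nonnegative `x sech² x` term of `(x tanh x)'` yields
`g'(x) ≥ tanh x / (2 √(x tanh x)) = √(tanh x) / (2 √x)`, and for `x = √μ ξ ≥ 1` we have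
`tanh x ≥ tanh 1`, so `ω_μ'(ξ) ≥ (√(tanh 1) / 2) μ^{-1/4} ξ^{-1/2}`.
-/

namespace Real

theorem hasDerivAt_tanh_s16 (x : ℝ) : HasDerivAt tanh (1 / cosh x ^ 2) x := by
  have h := (hasDerivAt_sinh x).div (hasDerivAt_cosh x) (cosh_pos x).ne'
  rwa [← sq, ← sq, cosh_sq_sub_sinh_sq,
    show sinh / cosh = tanh from funext fun y => (tanh_eq_sinh_div_cosh y).symm] at h

theorem tanh_strictMono : StrictMono tanh := fun x y hxy => by
  by_contra! hle
  have := artanh_le_artanh (neg_one_lt_tanh y) (tanh_lt_one x) hle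
  rw [artanh_tanh, artanh_tanh] at this
  linarith

theorem tanh_pos {x : ℝ} (hx : 0 < x) : 0 < tanh x := by
  simpa using tanh_strictMono hx

end Real

theorem omegaWW_eq_div_sqrt {μ : ℝ} (hμ : 0 < μ) (ξ : ℝ) :
    omegaWW μ ξ = omegaWW 1 (√μ * ξ) / √μ := by
  have hs : 0 < √μ := sqrt_pos.mpr hμ
  have hrescale : |ξ| * tanh (√μ * |ξ|) / √μ = √μ * |ξ| * tanh (√μ * |ξ|) / (√μ * √μ) := by
    field_simp
  rw [omegaWW, omegaWW, sqrt_one, one_mul, div_one, abs_mul, abs_of_pos hs, hrescale,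
    sqrt_div' _ (mul_self_nonneg _), sqrt_mul_self hs.le]

theorem deriv_omegaWW {μ : ℝ} (hμ : 0 < μ) (ξ : ℝ) :
    deriv (omegaWW μ) ξ = deriv (omegaWW 1) (√μ * ξ) := by
  have hs : 0 < √μ := sqrt_pos.mpr hμ
  rw [funext (omegaWW_eq_div_sqrt hμ), deriv_div_const, deriv_comp_mul_left, smul_eq_mul]
  field_simp

theorem hasDerivAt_omegaWW_one {x : ℝ} (hx : 0 < x) :
    HasDerivAt (omegaWW 1) ((tanh x + x / cosh x ^ 2) / (2 * √(x * tanh x))) x := by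
  have hev : (fun y => √(y * tanh y)) =ᶠ[nhds x] omegaWW 1 := by
    filter_upwards [eventually_gt_nhds hx] with y hy
    rw [omegaWW, abs_of_pos hy, sqrt_one, one_mul, div_one]
  have h := ((hasDerivAt_id x).mul (hasDerivAt_tanh_s16 x)).sqrt (mul_pos hx (tanh_pos hx)).ne'
  refine (h.congr_of_eventuallyEq hev.symm).congr_deriv ?_
  simp only [Pi.mul_apply, id, one_mul, mul_one_div]

theorem sqrt_tanh_mul_rpow_le_deriv_omegaWW_one {x : ℝ} (hx : 0 < x) :
    √(tanh x) / 2 * x ^ (-(1:ℝ) / 2) ≤ deriv (omegaWW 1) x := by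
  have hT := tanh_pos hx
  rw [(hasDerivAt_omegaWW_one hx).deriv]
  calc √(tanh x) / 2 * x ^ (-(1:ℝ) / 2) = tanh x / (2 * √(x * tanh x)) := by
        rw [neg_div, rpow_neg hx.le, ← sqrt_eq_rpow, sqrt_mul hx.le]
        have := sq_sqrt hT.le
        have : 0 < √(tanh x) := sqrt_pos.mpr hT
        have : 0 < √x := sqrt_pos.mpr hx
        field_simp
        linarith
    _ ≤ (tanh x + x / cosh x ^ 2) / (2 * √(x * tanh x)) := by
        gcongr
        exact le_add_of_nonneg_right (by positivity)

/-- Lower bound for the first derivative of the phase at high frequencies. -/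
theorem first_deriv_phase_lower_bound_high_freq :
    ∃ y₀ > 0, ∃ C > 0, ∀ μ > 0, ∀ ξ : ℝ, y₀ / Real.sqrt μ ≤ ξ →
      C * μ ^ (-(1:ℝ)/4) * ξ ^ (-(1:ℝ)/2) ≤ |deriv (omegaWW μ) ξ| := by
  refine ⟨1, one_pos, √(tanh 1) / 2, by have := tanh_pos one_pos; positivity, ?_⟩
  intro μ hμ ξ hξ
  have hs : 0 < √μ := sqrt_pos.mpr hμ
  have hx : 1 ≤ √μ * ξ := by rwa [div_le_iff₀' hs] at hξ
  have hξ0 : 0 < ξ := pos_of_mul_pos_right (one_pos.trans_le hx) hs.le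
  rw [deriv_omegaWW hμ]
  calc √(tanh 1) / 2 * μ ^ (-(1:ℝ)/4) * ξ ^ (-(1:ℝ)/2)
      = √(tanh 1) / 2 * (√μ * ξ) ^ (-(1:ℝ)/2) := by
        rw [mul_rpow hs.le hξ0.le, sqrt_eq_rpow μ, ← rpow_mul hμ.le]
        ring_nf
    _ ≤ √(tanh (√μ * ξ)) / 2 * (√μ * ξ) ^ (-(1:ℝ)/2) := by
        gcongr
        exact tanh_strictMono.monotone hx
    _ ≤ deriv (omegaWW 1) (√μ * ξ) := sqrt_tanh_mul_rpow_le_deriv_omegaWW_one (by linarith)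
    _ ≤ _ := le_abs_self _
end
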